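/- arXiv:1911.01827 — 3 statements merged into one kernel-verified Lean document; each statement's English description precedes it below -/
import Mathlib

section
/- If t_1, ..., t_J are independent with t_j ~ Weibull(a, λ_j), then for each index h, P(t_h = min_j t_j) = λ_h / (λ_1 + ... + λ_J). -/
/-! Let `S_l(y) = exp (-l * y ^ a)` be the Weibull survival function, so that the density is
`f_l = -S_l'`. Independence turns the probability that `t_h` wins the race into
`∫ f_{l_h}(y) ∏_{j ≠ h} S_{l_j}(y) dy`, and since `f_l · S_m = l / (l + m) · f_{l + m}`,
the integrand is `l_h / L` times the density of `Weibull(a, L)`, `L = ∑ l_j`, which integrates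
to `1`. -/

open MeasureTheory ProbabilityTheory Real

/-- The Weibull distribution with shape `a > 0` and rate `l > 0`, defined by its density
`a * l * t^(a-1) * exp (-l * t^a)` on `(0, ∞)` with respect to Lebesgue measure. -/
noncomputable def weibullMeasure (a l : ℝ) : Measure ℝ :=
  volume.withDensity fun t =>
    ENNReal.ofReal (if 0 < t then a * l * t ^ (a - 1) * Real.exp (-l * t ^ a) else 0)

open Set Filter Topology ENNReal

noncomputable def weibullPdf (a l t : ℝ) : ℝ :=
  if 0 < t then a * l * t ^ (a - 1) * exp (-l * t ^ a) else 0

lemma weibullMeasure_eq_withDensity (a l : ℝ) :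
    weibullMeasure a l = volume.withDensity fun t => ENNReal.ofReal (weibullPdf a l t) := rfl

lemma measurable_weibullPdf (a l : ℝ) : Measurable (weibullPdf a l) :=
  Measurable.ite measurableSet_Ioi (by fun_prop) measurable_const

lemma weibullPdf_nonneg {a l : ℝ} (ha : 0 ≤ a) (hl : 0 ≤ l) (t : ℝ) : 0 ≤ weibullPdf a l t := by
  unfold weibullPdf
  split_ifs with ht
  · have := ht.le; positivity
  · rfl

lemma hasDerivAt_neg_exp_neg_mul_rpow (a l : ℝ) {t : ℝ} (ht : 0 < t) :
    HasDerivAt (fun s => -exp (-l * s ^ a)) (weibullPdf a l t) t := by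
  have hpow : HasDerivAt (fun s => -exp (-l * s ^ a))
      (-(exp (-l * t ^ a) * (-l * (a * t ^ (a - 1))))) t :=
    ((hasDerivAt_rpow_const (Or.inl ht.ne')).const_mul (-l)).exp.neg
  convert hpow using 1
  rw [weibullPdf, if_pos ht]
  ring

lemma tendsto_neg_exp_neg_mul_rpow_atTop {a l : ℝ} (ha : 0 < a) (hl : 0 < l) :
    Tendsto (fun s : ℝ => -exp (-l * s ^ a)) atTop (𝓝 0) := by
  have hexp : Tendsto (fun s : ℝ => -l * s ^ a) atTop atBot :=
    (tendsto_rpow_atTop ha).const_mul_atTop_of_neg (neg_neg_of_pos hl)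
  simpa using (tendsto_exp_atBot.comp hexp).neg

lemma lintegral_Ioi_weibullPdf {a l : ℝ} (ha : 0 < a) (hl : 0 < l) {y : ℝ} (hy : 0 ≤ y) :
    ∫⁻ t in Ioi y, ENNReal.ofReal (weibullPdf a l t) = ENNReal.ofReal (exp (-l * y ^ a)) := by
  have hcont : ContinuousWithinAt (fun s : ℝ => -exp (-l * s ^ a)) (Ici y) y :=
    (continuousAt_const.mul (continuousAt_rpow_const y a (Or.inr ha.le))).rexp.neg
      |>.continuousWithinAt
  have hderiv : ∀ x ∈ Ioi y, HasDerivAt (fun s => -exp (-l * s ^ a)) (weibullPdf a l x) x :=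
    fun x hx => hasDerivAt_neg_exp_neg_mul_rpow a l (hy.trans_lt hx)
  have hnonneg : ∀ x ∈ Ioi y, 0 ≤ weibullPdf a l x := fun x _ => weibullPdf_nonneg ha.le hl.le x
  have hlim := tendsto_neg_exp_neg_mul_rpow_atTop ha hl
  rw [← ofReal_integral_eq_lintegral_ofReal
      (integrableOn_Ioi_deriv_of_nonneg hcont hderiv hnonneg hlim)
      ((ae_restrict_iff' measurableSet_Ioi).2 (.of_forall hnonneg)),
    integral_Ioi_of_hasDerivAt_of_nonneg hcont hderiv hnonneg hlim, zero_sub, neg_neg]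

lemma isProbabilityMeasure_weibullMeasure {a l : ℝ} (ha : 0 < a) (hl : 0 < l) :
    IsProbabilityMeasure (weibullMeasure a l) := by
  constructor
  have hsupp : (fun t => ENNReal.ofReal (weibullPdf a l t)).support ⊆ Ioi 0 :=
    Function.support_subset_iff'.2 fun t ht => by
      rw [weibullPdf, if_neg (show ¬0 < t from ht), ofReal_zero]
  rw [weibullMeasure_eq_withDensity, withDensity_apply _ MeasurableSet.univ, Measure.restrict_univ,
    ← setLIntegral_eq_of_support_subset hsupp, lintegral_Ioi_weibullPdf ha hl le_rfl,
    zero_rpow ha.ne', mul_zero, exp_zero, ofReal_one]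

lemma weibullMeasure_ae_pos (a l : ℝ) : ∀ᵐ t ∂weibullMeasure a l, 0 < t := by
  rw [weibullMeasure_eq_withDensity, ae_withDensity_iff (measurable_weibullPdf a l).ennreal_ofReal]
  refine .of_forall fun t ht => ?_
  by_contra h
  simp [weibullPdf, h] at ht

lemma weibullMeasure_Ici {a l : ℝ} (ha : 0 < a) (hl : 0 < l) {y : ℝ} (hy : 0 ≤ y) :
    weibullMeasure a l (Ici y) = ENNReal.ofReal (exp (-l * y ^ a)) := by
  rw [weibullMeasure_eq_withDensity, withDensity_apply _ measurableSet_Ici,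
    ← restrict_Ioi_eq_restrict_Ici, lintegral_Ioi_weibullPdf ha hl hy]

lemma weibullPdf_mul_exp_neg_mul_rpow (a : ℝ) {l m : ℝ} (hlm : l + m ≠ 0) (t : ℝ) :
    weibullPdf a l t * exp (-m * t ^ a) = l / (l + m) * weibullPdf a (l + m) t := by
  unfold weibullPdf
  split_ifs
  · rw [show -(l + m) * t ^ a = -l * t ^ a + -m * t ^ a by ring, exp_add]
    field_simp
  · simp

lemma lintegral_exp_neg_mul_rpow_weibullMeasure {a l m : ℝ} (ha : 0 < a) (hl : 0 < l)
    (hm : 0 ≤ m) :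
    ∫⁻ t, ENNReal.ofReal (exp (-m * t ^ a)) ∂weibullMeasure a l
      = ENNReal.ofReal (l / (l + m)) := by
  have hlm : 0 < l + m := by positivity
  have := isProbabilityMeasure_weibullMeasure ha hlm
  calc ∫⁻ t, ENNReal.ofReal (exp (-m * t ^ a)) ∂weibullMeasure a l
      = ∫⁻ t, ENNReal.ofReal (weibullPdf a l t) * ENNReal.ofReal (exp (-m * t ^ a)) :=
        lintegral_withDensity_eq_lintegral_mul _ (measurable_weibullPdf a l).ennreal_ofReal
          (by fun_prop)
    _ = ∫⁻ t, ENNReal.ofReal (l / (l + m)) * ENNReal.ofReal (weibullPdf a (l + m) t) := by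
        congr with t
        rw [← ofReal_mul (weibullPdf_nonneg ha.le hl.le t), ← ofReal_mul (by positivity),
          weibullPdf_mul_exp_neg_mul_rpow a hlm.ne']
    _ = ENNReal.ofReal (l / (l + m)) * weibullMeasure a (l + m) univ := by
        rw [lintegral_const_mul _ (measurable_weibullPdf a (l + m)).ennreal_ofReal,
          weibullMeasure_eq_withDensity, withDensity_apply _ .univ, Measure.restrict_univ]
    _ = ENNReal.ofReal (l / (l + m)) := by rw [measure_univ, mul_one]

lemma prod_weibullMeasure_Ici {ι : Type*} {a : ℝ} {l : ι → ℝ} (ha : 0 < a) (hl : ∀ i, 0 < l i)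
    (s : Finset ι) {y : ℝ} (hy : 0 ≤ y) :
    ∏ i ∈ s, weibullMeasure a (l i) (Ici y) = ENNReal.ofReal (exp (-(∑ i ∈ s, l i) * y ^ a)) := by
  simp_rw [weibullMeasure_Ici ha (hl _) hy]
  rw [← ofReal_prod_of_nonneg fun _ _ => (exp_pos _).le, ← exp_sum]
  simp [Finset.sum_mul]

lemma MeasureTheory.Measure.pi_setOf_forall_le_eq_lintegral {n : ℕ} (μ : Fin (n + 1) → Measure ℝ)
    [∀ i, SigmaFinite (μ i)] (i : Fin (n + 1)) :
    Measure.pi μ {x | ∀ j, x i ≤ x j} = ∫⁻ y, ∏ j : Fin n, μ (i.succAbove j) (Ici y) ∂μ i := by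
  set T : Set (ℝ × (Fin n → ℝ)) := {p | ∀ j, p.1 ≤ p.2 j}
  have hT : MeasurableSet T := by
    simp only [T, ofPred_forall]
    exact .iInter fun j =>
      measurableSet_le measurable_fst ((measurable_pi_apply j).comp measurable_snd)
  have hpre : MeasurableEquiv.piFinSuccAbove (fun _ => ℝ) i ⁻¹' T = {x | ∀ j, x i ≤ x j} := by
    ext x
    simp [T, Fin.forall_iff_succAbove i, Fin.removeNth]
  rw [← hpre, (measurePreserving_piFinSuccAbove μ i).measure_preimage hT.nullMeasurableSet,
    Measure.prod_apply hT]
  congr with y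
  have hfiber : Prod.mk y ⁻¹' T = univ.pi fun _ => Ici y := by
    ext z
    simp [T, Pi.le_def]
  rw [hfiber, Measure.pi_pi]

lemma eq_ciInf_iff_forall_le {ι α : Type*} [Finite ι] [ConditionallyCompleteLinearOrder α]
    (f : ι → α) (i : ι) : f i = ⨅ j, f j ↔ ∀ j, f i ≤ f j := by
  have : Nonempty ι := ⟨i⟩
  have hbdd := (finite_range f).bddBelow
  refine ⟨fun h j => h ▸ ciInf_le hbdd j, fun h => le_antisymm (le_ciInf h) (ciInf_le hbdd i)⟩

theorem weibull_racing_argmin_prob_general {Ω : Type*} [MeasurableSpace Ω] (P : Measure Ω)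
    (J : ℕ) (a : ℝ) (ha : 0 < a)
    (l : Fin J → ℝ) (hl : ∀ j, 0 < l j) (t : Fin J → Ω → ℝ)
    (hmeas : ∀ j, Measurable (t j))
    (hindep : iIndepFun t P)
    (hlaw : ∀ j, Measure.map (t j) P = weibullMeasure a (l j)) (h : Fin J) :
    P {ω | t h ω = ⨅ j, t j ω} = ENNReal.ofReal (l h / ∑ j, l j) := by
  obtain ⟨n, rfl⟩ := Nat.exists_eq_add_one_of_ne_zero h.pos.ne'
  have := fun j => isProbabilityMeasure_weibullMeasure ha (hl j)
  have hjoint : P.map (fun ω j => t j ω) = Measure.pi fun j => weibullMeasure a (l j) := by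
    simpa only [hlaw] using hindep.map_fun_eq_pi_map fun j => (hmeas j).aemeasurable
  have hargmin : MeasurableSet {x : Fin (n + 1) → ℝ | ∀ j, x h ≤ x j} := by
    simp only [ofPred_forall]
    exact .iInter fun j => measurableSet_le (measurable_pi_apply h) (measurable_pi_apply j)
  have hrest : ∀ᵐ y ∂weibullMeasure a (l h),
      ∏ j : Fin n, weibullMeasure a (l (h.succAbove j)) (Ici y)
        = ENNReal.ofReal (exp (-(∑ j : Fin n, l (h.succAbove j)) * y ^ a)) :=
    (weibullMeasure_ae_pos a (l h)).mono fun y hy =>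
      prod_weibullMeasure_Ici ha (fun j => hl _) Finset.univ hy.le
  calc P {ω | t h ω = ⨅ j, t j ω} = P ((fun ω j => t j ω) ⁻¹' {x | ∀ j, x h ≤ x j}) := by
        congr 1
        ext ω
        exact eq_ciInf_iff_forall_le (t · ω) h
    _ = Measure.pi (fun j => weibullMeasure a (l j)) {x | ∀ j, x h ≤ x j} := by
        rw [← hjoint, Measure.map_apply (measurable_pi_lambda _ hmeas) hargmin]
    _ = ∫⁻ y, ∏ j : Fin n, weibullMeasure a (l (h.succAbove j)) (Ici y) ∂weibullMeasure a (l h) :=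
        Measure.pi_setOf_forall_le_eq_lintegral _ h
    _ = ∫⁻ y, ENNReal.ofReal (exp (-(∑ j : Fin n, l (h.succAbove j)) * y ^ a))
          ∂weibullMeasure a (l h) := lintegral_congr_ae hrest
    _ = ENNReal.ofReal (l h / ∑ j, l j) := by
        rw [lintegral_exp_neg_mul_rpow_weibullMeasure ha (hl h)
          (Finset.sum_nonneg fun j _ => (hl _).le), ← Fin.sum_univ_succAbove l h]

/-- If `t_1, ..., t_J` are independent with `t_j ~ Weibull(a, λ_j)`, then for each `h`,
`P(t_h = min_j t_j) = λ_h / (λ_1 + ⋯ + λ_J)`. -/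
theorem weibull_racing_argmin_prob {Ω : Type*} [MeasurableSpace Ω] (P : Measure Ω)
    [IsProbabilityMeasure P] (J : ℕ) (hJ : 0 < J) (a : ℝ) (ha : 0 < a)
    (l : Fin J → ℝ) (hl : ∀ j, 0 < l j) (t : Fin J → Ω → ℝ)
    (hmeas : ∀ j, Measurable (t j))
    (hindep : iIndepFun t P)
    (hlaw : ∀ j, Measure.map (t j) P = weibullMeasure a (l j)) (h : Fin J) :
    P {ω | t h ω = ⨅ j, t j ω} = ENNReal.ofReal (l h / ∑ j, l j) :=
  weibull_racing_argmin_prob_general P J a ha l hl t hmeas hindep hlaw h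
end

section
/- For independent t_j ~ Weibull(a, λ_j), j = 1, ..., J, the integral ∫_τ^∞ exp(-u^a · Σ_{j≠h} λ_j) · a·λ_h·u^(a-1)·exp(-λ_h·u^a) du equals (λ_h / Σ_j λ_j) · exp(-τ^a · Σ_j λ_j), for all τ ≥ 0, a > 0, and λ_j > 0. -/
/-!
With `L = Σ_j λ_j = Σ_{j≠h} λ_j + λ_h`, the two exponentials merge and the integrand becomes
`λ_h / L` times the Weibull(a, L) density `a L u^(a-1) e^{-L u^a}`. That density is the
derivative of `-e^{-L u^a}`, which vanishes at infinity, so its integral over `(τ, ∞)` is the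
survival function `e^{-L τ^a}`.
-/

open MeasureTheory Real Filter Set Topology

theorem hasDerivAt_neg_exp_neg_mul_rpow_s4 {a x : ℝ} (c : ℝ) (hx : x ≠ 0) :
    HasDerivAt (fun u => -exp (-c * u ^ a)) (a * c * x ^ (a - 1) * exp (-c * x ^ a)) x := by
  refine (((hasDerivAt_rpow_const (Or.inl hx)).const_mul (-c)).exp.neg).congr_deriv ?_
  ring

theorem tendsto_exp_neg_mul_rpow_atTop {a c : ℝ} (ha : 0 < a) (hc : 0 < c) :
    Tendsto (fun u => exp (-c * u ^ a)) atTop (𝓝 0) :=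
  tendsto_exp_atBot.comp <| (tendsto_rpow_atTop ha).const_mul_atTop_of_neg (neg_neg_of_pos hc)

theorem integral_Ioi_rpow_mul_exp_neg_mul_rpow {a c τ : ℝ} (ha : 0 < a) (hc : 0 < c)
    (hτ : 0 ≤ τ) :
    ∫ u in Ioi τ, a * c * u ^ (a - 1) * exp (-c * u ^ a) = exp (-c * τ ^ a) := by
  have hcont : ContinuousWithinAt (fun u => -exp (-c * u ^ a)) (Ici τ) τ :=
    (continuousAt_const.mul (continuousAt_rpow_const τ a (Or.inr ha.le))).rexp.neg
      |>.continuousWithinAt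
  have hderiv : ∀ x ∈ Ioi τ, HasDerivAt (fun u => -exp (-c * u ^ a))
      (a * c * x ^ (a - 1) * exp (-c * x ^ a)) x :=
    fun x hx => hasDerivAt_neg_exp_neg_mul_rpow_s4 c (hτ.trans_lt hx).ne'
  have hnonneg : ∀ x ∈ Ioi τ, 0 ≤ a * c * x ^ (a - 1) * exp (-c * x ^ a) :=
    fun x hx => by have := rpow_pos_of_pos (hτ.trans_lt hx) (a - 1); positivity
  have hlim := (tendsto_exp_neg_mul_rpow_atTop ha hc).neg
  rw [neg_zero] at hlim
  rw [integral_Ioi_of_hasDerivAt_of_nonneg hcont hderiv hnonneg hlim]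
  ring

/-- The key integral identity in the proof of the Weibull racing property: for `a > 0`,
`λ_j > 0` and `τ ≥ 0`,
`∫_τ^∞ exp(-u^a Σ_{j≠h} λ_j) · a λ_h u^(a-1) exp(-λ_h u^a) du = (λ_h / Σ_j λ_j) exp(-τ^a Σ_j λ_j)`. -/
theorem weibull_racing_integral (J : ℕ) (a : ℝ) (ha : 0 < a) (l : Fin J → ℝ)
    (hl : ∀ j, 0 < l j) (h : Fin J) (τ : ℝ) (hτ : 0 ≤ τ) :
    (∫ u in Set.Ioi τ,
        Real.exp (-u ^ a * ∑ j ∈ Finset.univ.erase h, l j) *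
          (a * l h * u ^ (a - 1) * Real.exp (-l h * u ^ a))) =
      (l h / ∑ j, l j) * Real.exp (-τ ^ a * ∑ j, l j) := by
  set L := ∑ j, l j
  have hL : 0 < L := Finset.sum_pos (fun j _ => hl j) ⟨h, Finset.mem_univ h⟩
  have hsplit : ∑ j ∈ Finset.univ.erase h, l j + l h = L :=
    Finset.sum_erase_add _ _ (Finset.mem_univ h)
  have hintegrand (u : ℝ) :
      exp (-u ^ a * ∑ j ∈ Finset.univ.erase h, l j) *
          (a * l h * u ^ (a - 1) * exp (-l h * u ^ a)) =
        l h / L * (a * L * u ^ (a - 1) * exp (-L * u ^ a)) := by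
    have hexponent : -L * u ^ a = -u ^ a * ∑ j ∈ Finset.univ.erase h, l j + -l h * u ^ a := by
      rw [← hsplit]; ring
    rw [hexponent, exp_add]
    field_simp
  simp_rw [hintegrand]
  rw [integral_const_mul, integral_Ioi_rpow_mul_exp_neg_mul_rpow ha hL hτ, neg_mul, neg_mul,
    mul_comm L]
end

section
/- Let λ_t, t = 1, ..., T, be independent with λ_t ~ Gamma(r_t, 1/b_t) (shapes r_t > 0, rates b_t > 0), define b_(1) = max_t b_t, ρ = Σ_t r_t, γ_h = Σ_t (r_t/h)·(1 − b_t/b_(1))^h for h ≥ 1, δ_0 = 1, and δ_{m+1} = (1/(m+1))·Σ_{h=1}^{m+1} h·γ_h·δ_{m+1−h}. Then 0 ≤ δ_m ≤ Γ(ρ + m)·b_0^m / (Γ(ρ)·m!) for all m ≥ 0, where b_0 = max_t (1 − b_t/b_(1)). -/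
/-!
Since `0 ≤ h γ_h ≤ ρ b₀^h`, strong induction on the recursion bounds `δ_m` by the solution of
the same recursion with `h γ_h` replaced by `ρ b₀^h`, i.e. by the coefficients of
`(1 - b₀ x)^(-ρ)`. These are `Γ(ρ+m) b₀^m / (Γ(ρ) m!)`, because
`ρ Σ_{k ≤ m} Γ(ρ+k)/(Γ(ρ) k!) = (m+1) Γ(ρ+m+1)/(Γ(ρ) (m+1)!)`, which follows from `Γ(s+1) = s Γ(s)`.
-/

open Real Finset Nat

/-- The coefficient of `x ^ m` in `(1 - x) ^ (-ρ)`. -/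
noncomputable def negBinomCoeff (ρ : ℝ) (m : ℕ) : ℝ :=
  Gamma (ρ + m) / (Gamma ρ * m !)

section negBinomCoeff

variable {ρ : ℝ}

theorem negBinomCoeff_zero (hρ : 0 < ρ) : negBinomCoeff ρ 0 = 1 := by
  simp [negBinomCoeff, (Gamma_pos_of_pos hρ).ne']

theorem negBinomCoeff_succ (hρ : 0 < ρ) (m : ℕ) :
    (m + 1) * negBinomCoeff ρ (m + 1) = (ρ + m) * negBinomCoeff ρ m := by
  have hΓ : Gamma (ρ + (m + 1)) = (ρ + m) * Gamma (ρ + m) := by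
    rw [← add_assoc, Gamma_add_one (by positivity)]
  have : Gamma ρ ≠ 0 := (Gamma_pos_of_pos hρ).ne'
  simp only [negBinomCoeff, factorial_succ, Nat.cast_mul, Nat.cast_succ, hΓ]
  field_simp

theorem mul_sum_range_negBinomCoeff (hρ : 0 < ρ) (m : ℕ) :
    ρ * ∑ k ∈ range (m + 1), negBinomCoeff ρ k = (m + 1) * negBinomCoeff ρ (m + 1) := by
  induction m with
  | zero => simpa [negBinomCoeff_zero hρ] using (negBinomCoeff_succ hρ 0).symm
  | succ m ih =>
    rw [sum_range_succ, mul_add, ih, negBinomCoeff_succ hρ (m + 1)]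
    push_cast
    ring

end negBinomCoeff

theorem sum_Icc_one_sub {M : Type*} [AddCommMonoid M] (f : ℕ → M) (n : ℕ) :
    ∑ h ∈ Icc 1 n, f (n - h) = ∑ k ∈ range n, f k := by
  refine sum_nbij' (n - ·) (n - ·) ?_ ?_ ?_ ?_ fun _ _ => rfl <;>
    intro k hk <;> simp only [mem_Icc, mem_range] at hk ⊢ <;> omega

theorem sum_Icc_mul_negBinomCoeff_mul_pow {ρ : ℝ} (hρ : 0 < ρ) (a : ℝ) (m : ℕ) :
    ∑ h ∈ Icc 1 (m + 1), ρ * a ^ h * (negBinomCoeff ρ (m + 1 - h) * a ^ (m + 1 - h)) =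
      (m + 1) * (negBinomCoeff ρ (m + 1) * a ^ (m + 1)) := by
  have hpow : ∀ h ∈ Icc 1 (m + 1),
      ρ * a ^ h * (negBinomCoeff ρ (m + 1 - h) * a ^ (m + 1 - h)) =
        a ^ (m + 1) * (ρ * negBinomCoeff ρ (m + 1 - h)) := by
    intro h hh
    rw [← pow_mul_pow_sub a (mem_Icc.1 hh).2]
    ring
  rw [sum_congr rfl hpow, ← mul_sum, ← mul_sum, sum_Icc_one_sub (negBinomCoeff ρ),
    mul_sum_range_negBinomCoeff hρ]
  ring

theorem recursion_nonneg_and_le_negBinomCoeff_mul_pow {ρ a : ℝ} {c δ : ℕ → ℝ} (hρ : 0 < ρ)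
    (hc_nonneg : ∀ h, 1 ≤ h → 0 ≤ c h) (hc_le : ∀ h, 1 ≤ h → c h ≤ ρ * a ^ h)
    (hδ0 : δ 0 = 1)
    (hδ : ∀ m : ℕ, δ (m + 1) = 1 / (m + 1 : ℝ) * ∑ h ∈ Icc 1 (m + 1), c h * δ (m + 1 - h))
    (m : ℕ) : 0 ≤ δ m ∧ δ m ≤ negBinomCoeff ρ m * a ^ m := by
  induction m using Nat.strong_induction_on with
  | _ m ih =>
  cases m with
  | zero => simp [hδ0, negBinomCoeff_zero hρ]
  | succ m =>
    have hm : (0 : ℝ) < m + 1 := by positivity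
    have ih' : ∀ h ∈ Icc 1 (m + 1), 0 ≤ δ (m + 1 - h) ∧
        δ (m + 1 - h) ≤ negBinomCoeff ρ (m + 1 - h) * a ^ (m + 1 - h) :=
      fun h hh => ih _ (by have := (mem_Icc.1 hh).1; omega)
    refine ⟨?_, ?_⟩
    · rw [hδ]
      exact mul_nonneg (by positivity) <| sum_nonneg fun h hh =>
        mul_nonneg (hc_nonneg h (mem_Icc.1 hh).1) (ih' h hh).1
    · have hsum : ∑ h ∈ Icc 1 (m + 1), c h * δ (m + 1 - h) ≤
          (m + 1) * (negBinomCoeff ρ (m + 1) * a ^ (m + 1)) := by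
        rw [← sum_Icc_mul_negBinomCoeff_mul_pow hρ a m]
        refine sum_le_sum fun h hh => ?_
        have h1 := (mem_Icc.1 hh).1
        exact mul_le_mul (hc_le h h1) (ih' h hh).2 (ih' h hh).1
          ((hc_nonneg h h1).trans (hc_le h h1))
      rw [hδ, one_div, inv_mul_le_iff₀ hm]
      exact_mod_cast hsum

theorem sum_mul_pow_le_sum_mul {ι : Type*} (s : Finset ι) {r x : ι → ℝ} {a : ℝ}
    (hr : ∀ t ∈ s, 0 ≤ r t) (hx0 : ∀ t ∈ s, 0 ≤ x t) (hx : ∀ t ∈ s, x t ≤ a) (n : ℕ) :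
    ∑ t ∈ s, r t * x t ^ n ≤ (∑ t ∈ s, r t) * a ^ n := by
  rw [sum_mul]
  exact sum_le_sum fun t ht =>
    mul_le_mul_of_nonneg_left (pow_le_pow_left₀ (hx0 t ht) (hx t ht) n) (hr t ht)

theorem moschopoulos_delta_bound_general (T : ℕ) (r b : Fin T → ℝ)
    (hr : ∀ t, 0 < r t) (hb : ∀ t, 0 < b t)
    (b₁ : ℝ) (hb₁ : IsGreatest (Set.range b) b₁)
    (b₀ : ℝ) (hb₀ : IsGreatest (Set.range fun t => 1 - b t / b₁) b₀)
    (ρ : ℝ) (hρ : ρ = ∑ t, r t)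
    (γ : ℕ → ℝ) (hγ : ∀ h : ℕ, γ h = ∑ t, (r t / h) * (1 - b t / b₁) ^ h)
    (δ : ℕ → ℝ) (hδ0 : δ 0 = 1)
    (hδ : ∀ m : ℕ, δ (m + 1) =
      (1 / (m + 1 : ℝ)) * ∑ h ∈ Finset.Icc 1 (m + 1), (h : ℝ) * γ h * δ (m + 1 - h)) :
    ∀ m : ℕ, 0 ≤ δ m ∧
      δ m ≤ Real.Gamma (ρ + m) * b₀ ^ m / (Real.Gamma ρ * (Nat.factorial m : ℝ)) := by
  obtain ⟨t₀, hbt₀⟩ := hb₁.1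
  have hb₁_pos : 0 < b₁ := hbt₀ ▸ hb t₀
  have hx0 : ∀ t, 0 ≤ 1 - b t / b₁ := fun t =>
    sub_nonneg.2 <| (div_le_one hb₁_pos).2 <| hb₁.2 ⟨t, rfl⟩
  have hxb₀ : ∀ t, 1 - b t / b₁ ≤ b₀ := fun t => hb₀.2 ⟨t, rfl⟩
  have hρ_pos : 0 < ρ := hρ ▸ sum_pos (fun t _ => hr t) ⟨t₀, mem_univ t₀⟩
  have hcoeff : ∀ h : ℕ, 1 ≤ h → (h : ℝ) * γ h = ∑ t, r t * (1 - b t / b₁) ^ h := by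
    intro h hh
    have : (h : ℝ) ≠ 0 := by positivity
    rw [hγ, mul_sum]
    exact sum_congr rfl fun t _ => by field_simp
  intro m
  have key := recursion_nonneg_and_le_negBinomCoeff_mul_pow (c := fun h => (h : ℝ) * γ h)
    (a := b₀) hρ_pos
    (fun h hh => hcoeff h hh ▸ sum_nonneg fun t _ => mul_nonneg (hr t).le (pow_nonneg (hx0 t) h))
    (fun h hh => hcoeff h hh ▸ hρ ▸ sum_mul_pow_le_sum_mul univ
      (fun t _ => (hr t).le) (fun t _ => hx0 t) (fun t _ => hxb₀ t) h)
    hδ0 hδ m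
  rwa [negBinomCoeff, div_mul_eq_mul_div] at key

/-- Coefficient bound in the Moschopoulos series for the density of a sum of independent
gamma random variables: with `b₁ = max_t b_t`, `ρ = Σ_t r_t`,
`γ_h = Σ_t (r_t/h)(1 - b_t/b₁)^h`, `δ₀ = 1` and
`δ_{m+1} = (1/(m+1)) Σ_{h=1}^{m+1} h γ_h δ_{m+1-h}`, one has
`0 ≤ δ_m ≤ Γ(ρ+m) b₀^m / (Γ(ρ) m!)` where `b₀ = max_t (1 - b_t/b₁)`. -/
theorem moschopoulos_delta_bound (T : ℕ) (hT : 0 < T) (r b : Fin T → ℝ)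
    (hr : ∀ t, 0 < r t) (hb : ∀ t, 0 < b t)
    (b₁ : ℝ) (hb₁ : IsGreatest (Set.range b) b₁)
    (b₀ : ℝ) (hb₀ : IsGreatest (Set.range fun t => 1 - b t / b₁) b₀)
    (ρ : ℝ) (hρ : ρ = ∑ t, r t)
    (γ : ℕ → ℝ) (hγ : ∀ h : ℕ, γ h = ∑ t, (r t / h) * (1 - b t / b₁) ^ h)
    (δ : ℕ → ℝ) (hδ0 : δ 0 = 1)
    (hδ : ∀ m : ℕ, δ (m + 1) =
      (1 / (m + 1 : ℝ)) * ∑ h ∈ Finset.Icc 1 (m + 1), (h : ℝ) * γ h * δ (m + 1 - h)) :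
    ∀ m : ℕ, 0 ≤ δ m ∧
      δ m ≤ Real.Gamma (ρ + m) * b₀ ^ m / (Real.Gamma ρ * (Nat.factorial m : ℝ)) :=
  moschopoulos_delta_bound_general T r b hr hb b₁ hb₁ b₀ hb₀ ρ hρ γ hγ δ hδ0 hδ
end
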